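/- Let W be a stochastic matrix from a finite set X to pmfs on a finite set Y with C_0(W) ≠ C_1(W), and let R ∈ (C_0(W), C_1(W)). Then there exists φ ∈ (0,1) with C_φ(W) = R, and there exists η ∈ (φ,1) with ((1-η)/η)·C_η(W) = E_sp(R,W), the sphere packing exponent at rate R. -/

import Mathlib

open Real MeasureTheory Filter

def IsPMF {Y : Type*} [Fintype Y] (W : Y → ℝ) : Prop :=
  (∀ y, 0 ≤ W y) ∧ ∑ y, W y = 1

noncomputable def renyiDiv {Y : Type*} [Fintype Y] (α : ℝ) (W Q : Y → ℝ) : ℝ :=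
  if α = 1 then ∑ y, W y * Real.log (W y / Q y)
  else (α - 1)⁻¹ * Real.log (∑ y, W y ^ α * Q y ^ (1 - α))

open Classical in
/-- Extended-real-valued order-`α` Rényi divergence, taking the value `⊤` when the
divergence is infinite. -/
noncomputable def renyiDivE {Y : Type*} [Fintype Y] (α : ℝ) (W Q : Y → ℝ) : ENNReal :=
  if α = 1 then
    (if ∀ y, Q y = 0 → W y = 0 then ENNReal.ofReal (renyiDiv 1 W Q) else ⊤)
  else
    (if 0 < ∑ y, W y ^ α * Q y ^ (1 - α) then ENNReal.ofReal (renyiDiv α W Q) else ⊤)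

/-- The order-`α` tilted pmf `W^α_Q`. -/
noncomputable def tilt {Y : Type*} [Fintype Y] (α : ℝ) (W Q : Y → ℝ) : Y → ℝ :=
  fun y => Real.exp ((1 - α) * renyiDiv α W Q) * W y ^ α * Q y ^ (1 - α)

/-- The order-`α` Rényi information `I_α(P;W)` (mutual information for `α = 1`). -/
noncomputable def renyiInfo {X Y : Type*} [Fintype X] [Fintype Y] (α : ℝ) (P : X → ℝ)
    (W : X → Y → ℝ) : ℝ :=
  if α = 1 then ∑ x, P x * ∑ y, W x y * Real.log (W x y / (∑ x', P x' * W x' y))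
  else (α / (α - 1)) * Real.log (∑ y, (∑ x, P x * W x y ^ α) ^ α⁻¹)

/-- The order-`α` Rényi capacity `C_α(W) = sup_P I_α(P;W)`. -/
noncomputable def renyiCap {X Y : Type*} [Fintype X] [Fintype Y] (α : ℝ) (W : X → Y → ℝ) : ℝ :=
  sSup {c | ∃ P : X → ℝ, IsPMF P ∧ c = renyiInfo α P W}

/-- The sphere packing exponent `E_sp(R,W)`. -/
noncomputable def spe {X Y : Type*} [Fintype X] [Fintype Y] (R : ℝ) (W : X → Y → ℝ) : ℝ :=
  sSup {e | ∃ α ∈ Set.Ioo (0:ℝ) 1, e = ((1 - α) / α) * (renyiCap α W - R)}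

/-- The order-`α` Rényi mean `q_{α,P}`. -/
noncomputable def renyiMean {X Y : Type*} [Fintype X] [Fintype Y] (α : ℝ) (P : X → ℝ)
    (W : X → Y → ℝ) : Y → ℝ :=
  fun y => (∑ x, P x * W x y ^ α) ^ α⁻¹ / ∑ y', (∑ x, P x * W x y' ^ α) ^ α⁻¹

/-!
For `0 < α < 1`, `I_α(P;W) = α/(α-1) · log S_α` where `S_α = ∑_y M_α(y)` and `M_α(y)` is the
`P`-weighted power mean of order `α` of `x ↦ W x y`. Power means increase with the order, so
`(1-α)/α · I_α = -log S_α` decreases. By Hölder, `S_α^α` bounds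
`∑_y (∑_x P x W x y ^ α) Q y ^ (1-α)` for every pmf `Q`, with equality at the Rényi mean
`Q = q_{α,P}`; that sum is the `(1-α)`-th moment of the likelihood ratio `Q y / W x y` under
`P x W x y`. Comparing the moments of orders `1-β ≤ 1-α` for `Q = q_{β,P}` shows that `I_α`
increases. Taking suprema, `C_α` increases and `(1-α)/α · C_α` decreases on `(0,1)`, which
squeezes `C_α` into being continuous there. Differentiating `S_α` at `α = 1` gives `I_α → I_1`,
so some `C_α` with `α < 1` exceeds `R`, and `φ` comes from the intermediate value theorem.
Every term of `E_sp(R,W)` is at most `0` for `α ≤ φ`, and for `α ≥ φ` at most both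
`(1-φ)/φ · R - (1-α)/α · R` and `(1-α)/α · (log |Y| - R)`; averaging these bounds keeps
`E_sp(R,W)` strictly below `(1-φ)/φ · C_φ`. As `(1-α)/α · C_α → 0` when `α → 1`, the
intermediate value theorem yields `η`.
-/

open Set Topology

theorem IsPMF.exists_pos {ι : Type*} [Fintype ι] {w : ι → ℝ} (hw : IsPMF w) : ∃ i, 0 < w i := by
  by_contra! h
  have : ∑ i, w i ≤ 0 := Finset.sum_nonpos fun i _ => h i
  linarith [hw.2]

theorem isPMF_uniform (ι : Type*) [Fintype ι] [Nonempty ι] :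
    IsPMF (fun _ : ι => (Fintype.card ι : ℝ)⁻¹) := by
  refine ⟨fun _ => by positivity, ?_⟩
  simp

section PowerMean

variable {ι : Type*} [Fintype ι]

noncomputable def powerMean (w f : ι → ℝ) (p : ℝ) : ℝ :=
  (∑ i, w i * f i ^ p) ^ p⁻¹

theorem powerMean_nonneg {w f : ι → ℝ} (hw : ∀ i, 0 ≤ w i) (hf : ∀ i, 0 ≤ f i) (p : ℝ) :
    0 ≤ powerMean w f p :=
  rpow_nonneg (Finset.sum_nonneg fun i _ => mul_nonneg (hw i) (rpow_nonneg (hf i) p)) _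

theorem powerMean_pos {w f : ι → ℝ} (hw : ∀ i, 0 ≤ w i) (hf : ∀ i, 0 ≤ f i) {i : ι}
    (hwi : 0 < w i) (hfi : 0 < f i) (p : ℝ) : 0 < powerMean w f p := by
  refine rpow_pos_of_pos ?_ _
  exact lt_of_lt_of_le (mul_pos hwi (rpow_pos_of_pos hfi p))
    (Finset.single_le_sum (fun j _ => mul_nonneg (hw j) (rpow_nonneg (hf j) p))
      (Finset.mem_univ i))

theorem powerMean_le_powerMean {w f : ι → ℝ} (hw : IsPMF w) (hf : ∀ i, 0 ≤ f i) {p q : ℝ}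
    (hp : 0 < p) (hpq : p ≤ q) : powerMean w f p ≤ powerMean w f q := by
  have hq : 0 < q := hp.trans_le hpq
  have hA : 0 ≤ ∑ i, w i * f i ^ p :=
    Finset.sum_nonneg fun i _ => mul_nonneg (hw.1 i) (rpow_nonneg (hf i) p)
  have jensen : (∑ i, w i * f i ^ p) ^ (q / p) ≤ ∑ i, w i * f i ^ q := by
    convert rpow_arith_mean_le_arith_mean_rpow Finset.univ w (fun i => f i ^ p)
      (fun i _ => hw.1 i) hw.2 (fun i _ => rpow_nonneg (hf i) p) ((one_le_div hp).mpr hpq)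
      using 3 with i
    rw [← rpow_mul (hf i), mul_div_cancel₀ q hp.ne']
  calc powerMean w f p = ((∑ i, w i * f i ^ p) ^ (q / p)) ^ q⁻¹ := by
        rw [powerMean, ← rpow_mul hA]
        field_simp
    _ ≤ powerMean w f q := rpow_le_rpow (rpow_nonneg hA _) jensen (by positivity)

theorem hasDerivAt_sum_mul_rpow {w f : ι → ℝ} (hf : ∀ i, 0 ≤ f i) {p : ℝ} (hp : 0 < p) :
    HasDerivAt (fun q => ∑ i, w i * f i ^ q) (∑ i, w i * f i ^ p * log (f i)) p := by
  refine HasDerivAt.fun_sum (A := fun i q => w i * f i ^ q) fun i _ => ?_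
  rcases (hf i).eq_or_lt with hfi | hfi
  · have hzero : (fun q => w i * f i ^ q) =ᶠ[𝓝 p] fun _ => 0 := by
      filter_upwards [Ioi_mem_nhds hp] with q hq
      rw [← hfi, zero_rpow hq.ne', mul_zero]
    have hderiv : w i * f i ^ p * log (f i) = 0 := by rw [← hfi, log_zero, mul_zero]
    rw [hderiv]
    exact (hasDerivAt_const p 0).congr_of_eventuallyEq hzero
  · rw [mul_assoc]
    exact (hasStrictDerivAt_const_rpow hfi p).hasDerivAt.const_mul (w i)

theorem hasDerivAt_powerMean_one {w f : ι → ℝ} (hw : ∀ i, 0 ≤ w i) (hf : ∀ i, 0 ≤ f i) :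
    HasDerivAt (powerMean w f)
      (∑ i, w i * f i * log (f i) - (∑ i, w i * f i) * log (∑ i, w i * f i)) 1 := by
  have hA := hasDerivAt_sum_mul_rpow (w := w) hf one_pos
  simp only [rpow_one] at hA
  rcases (Finset.sum_nonneg fun i _ => mul_nonneg (hw i) (hf i) :
      0 ≤ ∑ i, w i * f i).eq_or_lt with hA1 | hA1
  · have hwf : ∀ i, w i * f i = 0 := fun i =>
      (Finset.sum_eq_zero_iff_of_nonneg fun i _ => mul_nonneg (hw i) (hf i)).mp hA1.symm i
        (Finset.mem_univ i)
    have hzero : powerMean w f =ᶠ[𝓝 1] fun _ => 0 := by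
      filter_upwards [Ioi_mem_nhds one_pos] with p hp
      have hterm : ∀ i, w i * f i ^ p = 0 := fun i => by
        rcases mul_eq_zero.mp (hwf i) with h | h <;> simp [h, zero_rpow hp.ne']
      simp [powerMean, hterm, zero_rpow (inv_pos.mpr hp).ne']
    simp only [hwf, zero_mul, Finset.sum_const_zero, sub_zero]
    exact (hasDerivAt_const 1 0).congr_of_eventuallyEq hzero
  · refine (hA.rpow (hasDerivAt_inv one_ne_zero) (by simpa using hA1)).congr_deriv ?_
    simp only [rpow_one, inv_one, sub_self, rpow_zero, one_pow]
    ring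

end PowerMean

theorem continuousAt_of_monotoneOn_of_antitoneOn_mul {f h : ℝ → ℝ} {s : Set ℝ} {a : ℝ}
    (hs : s ∈ 𝓝 a) (hf : MonotoneOn f s) (hhf : AntitoneOn (fun x => h x * f x) s)
    (hh : ContinuousAt h a) (hpos : ∀ x ∈ s, 0 < h x) : ContinuousAt f a := by
  have ha : a ∈ s := mem_of_mem_nhds hs
  set c : ℝ → ℝ := fun x => h a * f a / h x
  have hc : Tendsto c (𝓝 a) (𝓝 (f a)) := by
    have := (tendsto_const_nhds (x := h a * f a)).div hh.tendsto (hpos a ha).ne'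
    rwa [mul_div_cancel_left₀ _ (hpos a ha).ne'] at this
  have hbetween : ∀ x ∈ s, min (f a) (c x) ≤ f x ∧ f x ≤ max (f a) (c x) := by
    intro x hx
    rcases le_total x a with hxa | hax
    · have hcx : c x ≤ f x := (div_le_iff₀ (hpos x hx)).mpr (by
        linarith [hhf hx ha hxa, mul_comm (f x) (h x)])
      exact ⟨(min_le_right _ _).trans hcx, (hf hx ha hxa).trans (le_max_left _ _)⟩
    · have hcx : f x ≤ c x := (le_div_iff₀ (hpos x hx)).mpr (by
        linarith [hhf ha hx hax, mul_comm (f x) (h x)])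
      exact ⟨(min_le_left _ _).trans (hf ha hx hax), hcx.trans (le_max_right _ _)⟩
  have hlow : Tendsto (fun x => min (f a) (c x)) (𝓝 a) (𝓝 (f a)) := by
    simpa using (tendsto_const_nhds (x := f a)).min hc
  have hup : Tendsto (fun x => max (f a) (c x)) (𝓝 a) (𝓝 (f a)) := by
    simpa using (tendsto_const_nhds (x := f a)).max hc
  refine tendsto_of_tendsto_of_tendsto_of_le_of_le' hlow hup ?_ ?_
  · filter_upwards [hs] with x hx using (hbetween x hx).1
  · filter_upwards [hs] with x hx using (hbetween x hx).2

section RenyiSum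

variable {X Y : Type*} [Fintype X] [Fintype Y] {W : X → Y → ℝ} {P : X → ℝ} {α β : ℝ}

noncomputable def renyiSum (α : ℝ) (P : X → ℝ) (W : X → Y → ℝ) : ℝ :=
  ∑ y, powerMean P (fun x => W x y) α

theorem renyiInfo_eq_log_renyiSum (hα : α ≠ 1) :
    renyiInfo α P W = α / (α - 1) * log (renyiSum α P W) := by
  rw [renyiInfo, if_neg hα]
  rfl

theorem sum_sum_mul_eq_one (hW : ∀ x, IsPMF (W x)) (hP : IsPMF P) :
    ∑ y, ∑ x, P x * W x y = 1 := by
  rw [Finset.sum_comm]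
  simp [← Finset.mul_sum, (hW _).2, hP.2]

theorem sum_mul_rpow_nonneg (hW : ∀ x, IsPMF (W x)) (hP : IsPMF P) (α : ℝ) (y : Y) :
    0 ≤ ∑ x, P x * W x y ^ α :=
  Finset.sum_nonneg fun x _ => mul_nonneg (hP.1 x) (rpow_nonneg ((hW x).1 y) α)

theorem isPMF_prod_mul (hW : ∀ x, IsPMF (W x)) (hP : IsPMF P) :
    IsPMF fun p : X × Y => P p.1 * W p.1 p.2 := by
  refine ⟨fun p => mul_nonneg (hP.1 p.1) ((hW p.1).1 p.2), ?_⟩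
  rw [Fintype.sum_prod_type, Finset.sum_comm, sum_sum_mul_eq_one hW hP]

theorem renyiSum_one (hW : ∀ x, IsPMF (W x)) (hP : IsPMF P) : renyiSum 1 P W = 1 := by
  simpa [renyiSum, powerMean] using sum_sum_mul_eq_one hW hP

theorem renyiSum_pos (hW : ∀ x, IsPMF (W x)) (hP : IsPMF P) (α : ℝ) : 0 < renyiSum α P W := by
  obtain ⟨x, hx⟩ := hP.exists_pos
  obtain ⟨y, hy⟩ := (hW x).exists_pos
  exact Finset.sum_pos' (fun y _ => powerMean_nonneg hP.1 (fun x => (hW x).1 y) α)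
    ⟨y, Finset.mem_univ y, powerMean_pos hP.1 (fun x => (hW x).1 y) hx hy α⟩

theorem renyiSum_le_renyiSum (hW : ∀ x, IsPMF (W x)) (hP : IsPMF P) (hα : 0 < α)
    (hαβ : α ≤ β) : renyiSum α P W ≤ renyiSum β P W :=
  Finset.sum_le_sum fun y _ => powerMean_le_powerMean hP (fun x => (hW x).1 y) hα hαβ

theorem renyiInfo_nonneg (hW : ∀ x, IsPMF (W x)) (hP : IsPMF P) (hα : 0 < α) (hα1 : α < 1) :
    0 ≤ renyiInfo α P W := by
  have hS : renyiSum α P W ≤ 1 := renyiSum_one hW hP ▸ renyiSum_le_renyiSum hW hP hα hα1.le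
  rw [renyiInfo_eq_log_renyiSum hα1.ne]
  exact mul_nonneg_of_nonpos_of_nonpos (div_nonpos_of_nonneg_of_nonpos hα.le (by linarith))
    (log_nonpos (renyiSum_pos hW hP α).le hS)

theorem renyiInfo_le_log_card (hW : ∀ x, IsPMF (W x)) (hP : IsPMF P) (hα : 0 < α)
    (hα1 : α < 1) : renyiInfo α P W ≤ log (Fintype.card Y) := by
  set A : Y → ℝ := fun y => ∑ x, P x * W x y ^ α
  have hA : ∀ y, 0 ≤ A y := sum_mul_rpow_nonneg hW hP α
  have hsumA : 1 ≤ ∑ y, A y := by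
    rw [← sum_sum_mul_eq_one hW hP]
    refine Finset.sum_le_sum fun y _ => Finset.sum_le_sum fun x _ => ?_
    have hle : W x y ≤ 1 := (hW x).2 ▸
      Finset.single_le_sum (fun y _ => (hW x).1 y) (Finset.mem_univ y)
    exact mul_le_mul_of_nonneg_left (self_le_rpow_of_le_one ((hW x).1 y) hle hα1.le) (hP.1 x)
  obtain ⟨x, -⟩ := hP.exists_pos
  obtain ⟨y, -⟩ := (hW x).exists_pos
  have : Nonempty Y := ⟨y⟩
  set n : ℝ := (Fintype.card Y : ℝ)
  have hn : 0 < n := by positivity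
  have hmean :=
    powerMean_le_powerMean (isPMF_uniform Y) hA zero_lt_one ((one_le_inv₀ hα).mpr hα1.le)
  simp only [powerMean, rpow_one, inv_one, inv_inv, ← Finset.mul_sum] at hmean
  have hS : n⁻¹ ≤ (n⁻¹ * renyiSum α P W) ^ α := by
    refine le_trans ?_ hmean
    simpa using mul_le_mul_of_nonneg_left hsumA (inv_nonneg.mpr hn.le)
  have hlog := log_le_log (by positivity) hS
  rw [log_rpow (mul_pos (inv_pos.mpr hn) (renyiSum_pos hW hP α)),
    log_mul (inv_ne_zero hn.ne') (renyiSum_pos hW hP α).ne', log_inv] at hlog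
  rw [renyiInfo_eq_log_renyiSum hα1.ne, div_mul_eq_mul_div, div_le_iff_of_neg (by linarith)]
  linarith

theorem div_mul_renyiInfo_eq_neg_log (hα : α ≠ 0) (hα1 : α ≠ 1) :
    (1 - α) / α * renyiInfo α P W = -log (renyiSum α P W) := by
  rw [renyiInfo_eq_log_renyiSum hα1]
  have : α - 1 ≠ 0 := sub_ne_zero.mpr hα1
  field_simp
  ring

theorem div_mul_renyiInfo_le (hW : ∀ x, IsPMF (W x)) (hP : IsPMF P) (hα : 0 < α)
    (hαβ : α ≤ β) (hα1 : α ≠ 1) (hβ1 : β ≠ 1) :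
    (1 - β) / β * renyiInfo β P W ≤ (1 - α) / α * renyiInfo α P W := by
  rw [div_mul_renyiInfo_eq_neg_log hα.ne' hα1,
    div_mul_renyiInfo_eq_neg_log (hα.trans_le hαβ).ne' hβ1, neg_le_neg_iff]
  exact log_le_log (renyiSum_pos hW hP α) (renyiSum_le_renyiSum hW hP hα hαβ)

theorem renyiMean_eq_powerMean_div (y : Y) :
    renyiMean α P W y = powerMean P (fun x => W x y) α / renyiSum α P W :=
  rfl

theorem isPMF_renyiMean (hW : ∀ x, IsPMF (W x)) (hP : IsPMF P) (α : ℝ) :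
    IsPMF (renyiMean α P W) := by
  refine ⟨fun y => div_nonneg (powerMean_nonneg hP.1 (fun x => (hW x).1 y) α)
    (renyiSum_pos hW hP α).le, ?_⟩
  simp only [renyiMean_eq_powerMean_div, ← Finset.sum_div]
  exact div_self (renyiSum_pos hW hP α).ne'

theorem sum_mul_rpow_le_renyiSum_rpow (hW : ∀ x, IsPMF (W x)) (hP : IsPMF P) (hα : 0 < α)
    (hα1 : α < 1) {Q : Y → ℝ} (hQ : IsPMF Q) :
    ∑ y, (∑ x, P x * W x y ^ α) * Q y ^ (1 - α) ≤ renyiSum α P W ^ α := by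
  have hpq : α⁻¹.HolderConjugate (1 - α)⁻¹ :=
    (Real.holderConjugate_iff).mpr ⟨(one_lt_inv₀ hα).mpr hα1, by simp⟩
  have holder := inner_le_Lp_mul_Lq_of_nonneg Finset.univ
    (f := fun y => ∑ x, P x * W x y ^ α) hpq
    (fun y _ => sum_mul_rpow_nonneg hW hP α y)
    (fun y _ => rpow_nonneg (hQ.1 y) (1 - α))
  have hQ1 : ∀ y, (Q y ^ (1 - α)) ^ (1 - α)⁻¹ = Q y := fun y => by
    rw [← rpow_mul (hQ.1 y), mul_inv_cancel₀ (by linarith), rpow_one]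
  simpa [hQ1, hQ.2, renyiSum, powerMean] using holder

theorem sum_mul_renyiMean_rpow (hW : ∀ x, IsPMF (W x)) (hP : IsPMF P) (hα : 0 < α) :
    ∑ y, (∑ x, P x * W x y ^ α) * renyiMean α P W y ^ (1 - α) = renyiSum α P W ^ α := by
  have hS := renyiSum_pos hW hP α
  have hterm : ∀ y, (∑ x, P x * W x y ^ α) * renyiMean α P W y ^ (1 - α)
      = powerMean P (fun x => W x y) α / renyiSum α P W ^ (1 - α) := fun y => by
    have hM := powerMean_nonneg hP.1 (fun x => (hW x).1 y) α
    have hMα : powerMean P (fun x => W x y) α ^ α = ∑ x, P x * W x y ^ α := by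
      rw [powerMean, ← rpow_mul (sum_mul_rpow_nonneg hW hP α y), inv_mul_cancel₀ hα.ne', rpow_one]
    rw [renyiMean_eq_powerMean_div, div_rpow hM hS.le, ← hMα, mul_div_assoc',
      ← rpow_add' hM (by simp), add_sub_cancel, rpow_one]
  simp only [hterm, ← Finset.sum_div]
  rw [← renyiSum, div_eq_iff (rpow_pos_of_pos hS _).ne', ← rpow_add hS, add_sub_cancel, rpow_one]

theorem sum_mul_rpow_eq_sum_prod (hW : ∀ x, IsPMF (W x)) {γ : ℝ} (hγ : 0 < γ) {Q : Y → ℝ}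
    (hQ : ∀ y, 0 ≤ Q y) :
    ∑ y, (∑ x, P x * W x y ^ γ) * Q y ^ (1 - γ)
      = ∑ p : X × Y, P p.1 * W p.1 p.2 * (Q p.2 / W p.1 p.2) ^ (1 - γ) := by
  rw [Fintype.sum_prod_type, Finset.sum_comm]
  refine Finset.sum_congr rfl fun y _ => ?_
  rw [Finset.sum_mul]
  refine Finset.sum_congr rfl fun x _ => ?_
  rcases ((hW x).1 y).eq_or_lt with hWxy | hWxy
  · simp [← hWxy, zero_rpow hγ.ne']
  · have hsplit : W x y = W x y ^ γ * W x y ^ (1 - γ) := by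
      rw [← rpow_add hWxy, add_sub_cancel, rpow_one]
    rw [div_rpow (hQ y) hWxy.le, mul_div_assoc', eq_div_iff (rpow_pos_of_pos hWxy _).ne']
    linear_combination (-(P x * Q y ^ (1 - γ))) * hsplit

theorem renyiInfo_eq_neg_log_rpow (hW : ∀ x, IsPMF (W x)) (hP : IsPMF P) (hα : α < 1) :
    renyiInfo α P W = -log ((renyiSum α P W ^ α) ^ (1 - α)⁻¹) := by
  have hS := renyiSum_pos hW hP α
  rw [log_rpow (rpow_pos_of_pos hS _), log_rpow hS, renyiInfo_eq_log_renyiSum hα.ne]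
  have : α - 1 ≠ 0 := by linarith
  have : 1 - α ≠ 0 := by linarith
  field_simp
  ring

theorem renyiInfo_le_renyiInfo (hW : ∀ x, IsPMF (W x)) (hP : IsPMF P) (hα : 0 < α)
    (hαβ : α ≤ β) (hβ : β < 1) : renyiInfo α P W ≤ renyiInfo β P W := by
  have hβ0 : 0 < β := hα.trans_le hαβ
  set Q := renyiMean β P W
  have hQ := isPMF_renyiMean hW hP β
  have hZ : ∀ p : X × Y, 0 ≤ Q p.2 / W p.1 p.2 := fun p =>
    div_nonneg (hQ.1 p.2) ((hW p.1).1 p.2)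
  have hmean := powerMean_le_powerMean (isPMF_prod_mul hW hP) hZ (by linarith : 0 < 1 - β)
    (by linarith : 1 - β ≤ 1 - α)
  simp only [powerMean] at hmean
  rw [← sum_mul_rpow_eq_sum_prod hW hβ0 hQ.1, ← sum_mul_rpow_eq_sum_prod hW hα hQ.1,
    sum_mul_renyiMean_rpow hW hP hβ0] at hmean
  have hT : 0 ≤ ∑ y, (∑ x, P x * W x y ^ α) * Q y ^ (1 - α) := Finset.sum_nonneg fun y _ =>
    mul_nonneg (sum_mul_rpow_nonneg hW hP α y) (rpow_nonneg (hQ.1 y) _)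
  have hholder := rpow_le_rpow hT (sum_mul_rpow_le_renyiSum_rpow hW hP hα (by linarith) hQ)
    (inv_nonneg.mpr (by linarith : 0 ≤ 1 - α))
  have hSβ := renyiSum_pos hW hP β
  rw [renyiInfo_eq_neg_log_rpow hW hP (by linarith), renyiInfo_eq_neg_log_rpow hW hP hβ]
  exact neg_le_neg (log_le_log (by positivity) (hmean.trans hholder))

theorem renyiInfo_one_eq (hW : ∀ x, IsPMF (W x)) (hP : IsPMF P) :
    renyiInfo 1 P W = ∑ y, (∑ x, P x * W x y * log (W x y)
      - (∑ x, P x * W x y) * log (∑ x, P x * W x y)) := by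
  rw [renyiInfo, if_pos rfl]
  simp only [Finset.mul_sum, Finset.sum_mul, ← Finset.sum_sub_distrib]
  rw [Finset.sum_comm]
  refine Finset.sum_congr rfl fun y _ => Finset.sum_congr rfl fun x _ => ?_
  rcases (mul_nonneg (hP.1 x) ((hW x).1 y)).eq_or_lt with hPW | hPW
  · rcases mul_eq_zero.mp hPW.symm with h | h <;> simp [h]
  · have hQ : 0 < ∑ x', P x' * W x' y := hPW.trans_le (Finset.single_le_sum
      (fun x' _ => mul_nonneg (hP.1 x') ((hW x').1 y)) (Finset.mem_univ x))
    rw [log_div (pos_of_mul_pos_right hPW (hP.1 x)).ne' hQ.ne']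
    ring

theorem hasDerivAt_renyiSum_one (hW : ∀ x, IsPMF (W x)) (hP : IsPMF P) :
    HasDerivAt (fun α => renyiSum α P W) (renyiInfo 1 P W) 1 := by
  rw [renyiInfo_one_eq hW hP]
  exact HasDerivAt.fun_sum fun y _ => hasDerivAt_powerMean_one hP.1 fun x => (hW x).1 y

theorem tendsto_renyiInfo_one (hW : ∀ x, IsPMF (W x)) (hP : IsPMF P) :
    Tendsto (fun α => renyiInfo α P W) (𝓝[≠] 1) (𝓝 (renyiInfo 1 P W)) := by
  have hlog := (hasDerivAt_renyiSum_one hW hP).log (renyiSum_pos hW hP 1).ne'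
  rw [renyiSum_one hW hP, div_one] at hlog
  have hslope := (tendsto_nhdsWithin_of_tendsto_nhds tendsto_id).mul
    (hasDerivAt_iff_tendsto_slope.mp hlog)
  rw [one_mul] at hslope
  refine hslope.congr' (eventually_nhdsWithin_of_forall fun α (hα : α ≠ 1) => ?_)
  dsimp only [id]
  rw [slope_def_field, renyiSum_one hW hP, log_one, sub_zero, renyiInfo_eq_log_renyiSum hα]
  ring

end RenyiSum

section RenyiCap

variable {X Y : Type*} [Fintype X] [Fintype Y] {W : X → Y → ℝ} {α : ℝ}

theorem bddAbove_renyiInfo (hW : ∀ x, IsPMF (W x)) (hα : 0 < α) (hα1 : α < 1) :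
    BddAbove {c | ∃ P : X → ℝ, IsPMF P ∧ c = renyiInfo α P W} :=
  ⟨log (Fintype.card Y), fun _ ⟨_, hP, hc⟩ => hc ▸ renyiInfo_le_log_card hW hP hα hα1⟩

theorem renyiInfo_le_renyiCap (hW : ∀ x, IsPMF (W x)) {P : X → ℝ} (hP : IsPMF P) (hα : 0 < α)
    (hα1 : α < 1) : renyiInfo α P W ≤ renyiCap α W :=
  le_csSup (bddAbove_renyiInfo hW hα hα1) ⟨P, hP, rfl⟩

variable [Nonempty X]

theorem renyiCap_le {c : ℝ} (h : ∀ P, IsPMF P → renyiInfo α P W ≤ c) : renyiCap α W ≤ c :=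
  csSup_le ⟨_, _, isPMF_uniform X, rfl⟩ fun _ ⟨P, hP, hc⟩ => hc ▸ h P hP

theorem renyiCap_nonneg (hW : ∀ x, IsPMF (W x)) (hα : 0 < α) (hα1 : α < 1) :
    0 ≤ renyiCap α W :=
  (renyiInfo_nonneg hW (isPMF_uniform X) hα hα1).trans
    (renyiInfo_le_renyiCap hW (isPMF_uniform X) hα hα1)

theorem renyiCap_le_log_card (hW : ∀ x, IsPMF (W x)) (hα : 0 < α) (hα1 : α < 1) :
    renyiCap α W ≤ log (Fintype.card Y) :=
  renyiCap_le fun _ hP => renyiInfo_le_log_card hW hP hα hα1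

theorem monotoneOn_renyiCap (hW : ∀ x, IsPMF (W x)) :
    MonotoneOn (fun α => renyiCap α W) (Ioo 0 1) := fun _ hα _ hβ hαβ =>
  renyiCap_le fun _ hP =>
    (renyiInfo_le_renyiInfo hW hP hα.1 hαβ hβ.2).trans (renyiInfo_le_renyiCap hW hP hβ.1 hβ.2)

theorem antitoneOn_div_mul_renyiCap (hW : ∀ x, IsPMF (W x)) :
    AntitoneOn (fun α => (1 - α) / α * renyiCap α W) (Ioo 0 1) := by
  intro α hα β hβ hαβ
  have hc : 0 < (1 - β) / β := div_pos (by linarith [hβ.2]) hβ.1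
  refine (le_div_iff₀' hc).mp (renyiCap_le fun P hP => (le_div_iff₀' hc).mpr ?_)
  exact (div_mul_renyiInfo_le hW hP hα.1 hαβ hα.2.ne hβ.2.ne).trans
    (mul_le_mul_of_nonneg_left (renyiInfo_le_renyiCap hW hP hα.1 hα.2)
      (div_nonneg (by linarith [hα.2]) hα.1.le))

theorem continuousOn_renyiCap (hW : ∀ x, IsPMF (W x)) :
    ContinuousOn (fun α => renyiCap α W) (Ioo 0 1) := fun a ha =>
  (continuousAt_of_monotoneOn_of_antitoneOn_mul (isOpen_Ioo.mem_nhds ha) (monotoneOn_renyiCap hW)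
    (antitoneOn_div_mul_renyiCap hW)
    ((continuousAt_const.sub continuousAt_id).div continuousAt_id ha.1.ne')
    fun x hx => div_pos (by linarith [hx.2]) hx.1).continuousWithinAt

theorem exists_lt_renyiCap_of_lt_renyiCap_one (hW : ∀ x, IsPMF (W x)) {R : ℝ}
    (hR : R < renyiCap 1 W) : ∃ α ∈ Ioo 0 1, R < renyiCap α W := by
  obtain ⟨_, ⟨P, hP, rfl⟩, hRP⟩ := exists_lt_of_lt_csSup
    (s := {c | ∃ P : X → ℝ, IsPMF P ∧ c = renyiInfo 1 P W}) ⟨_, _, isPMF_uniform X, rfl⟩ hR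
  have hlim := (tendsto_renyiInfo_one hW hP).mono_left
    (nhdsWithin_mono _ fun _ h => ne_of_lt h : 𝓝[<] (1 : ℝ) ≤ 𝓝[≠] 1)
  obtain ⟨α, hRα, hα⟩ :=
    ((hlim.eventually (lt_mem_nhds hRP)).and (Ioo_mem_nhdsLT one_pos)).exists
  exact ⟨α, hα, hRα.trans_le (renyiInfo_le_renyiCap hW hP hα.1 hα.2)⟩

end RenyiCap

section SpherePacking

variable {X Y : Type*} [Fintype X] [Fintype Y] [Nonempty X] {W : X → Y → ℝ} {R φ : ℝ}

theorem div_mul_sub_renyiCap_le (hW : ∀ x, IsPMF (W x)) (hφ : φ ∈ Ioo 0 1)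
    (hφR : renyiCap φ W = R) (hR : 0 ≤ R) (hRL : R < log (Fintype.card Y)) {α : ℝ}
    (hα : α ∈ Ioo 0 1) :
    (1 - α) / α * (renyiCap α W - R)
      ≤ (log (Fintype.card Y) - R) / log (Fintype.card Y) * ((1 - φ) / φ * R) := by
  set L := log (Fintype.card Y)
  rw [div_mul_eq_mul_div (L - R), le_div_iff₀' (hR.trans_lt hRL)]
  have hk : 0 ≤ (1 - α) / α := div_nonneg (by linarith [hα.2]) hα.1.le
  have hgφ : 0 ≤ (1 - φ) / φ * R := mul_nonneg (div_nonneg (by linarith [hφ.2]) hφ.1.le) hR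
  rcases le_total α φ with hαφ | hφα
  · have hCα : renyiCap α W ≤ R := hφR ▸ monotoneOn_renyiCap hW hα hφ hαφ
    nlinarith [mul_nonpos_of_nonneg_of_nonpos hk (sub_nonpos.mpr hCα)]
  · -- `hnear` is sharp near `φ`, `hfar` near `1`; their average with weights `L - R`, `R` is
    -- free of `α`
    have hnear : (1 - α) / α * (renyiCap α W - R) ≤ (1 - φ) / φ * R - (1 - α) / α * R := by
      have := antitoneOn_div_mul_renyiCap hW hφ hα hφα
      simp only [hφR] at this
      linarith
    have hfar : (1 - α) / α * (renyiCap α W - R) ≤ (1 - α) / α * (L - R) :=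
      mul_le_mul_of_nonneg_left (by linarith [renyiCap_le_log_card hW hα.1 hα.2]) hk
    nlinarith [mul_le_mul_of_nonneg_left hnear (sub_nonneg.mpr hRL.le),
      mul_le_mul_of_nonneg_left hfar hR]

theorem spe_lt_of_renyiCap_eq (hW : ∀ x, IsPMF (W x)) (hφ : φ ∈ Ioo 0 1)
    (hφR : renyiCap φ W = R) (hR : 0 < R) (hRL : R < log (Fintype.card Y)) :
    spe R W < (1 - φ) / φ * R := by
  have hspe : spe R W ≤ (log (Fintype.card Y) - R) / log (Fintype.card Y) * ((1 - φ) / φ * R) :=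
    csSup_le ⟨_, φ, hφ, rfl⟩ fun _ ⟨α, hα, he⟩ =>
      he ▸ div_mul_sub_renyiCap_le hW hφ hφR hR.le hRL hα
  refine hspe.trans_lt (mul_lt_of_lt_one_left (mul_pos (div_pos (by linarith [hφ.2]) hφ.1) hR) ?_)
  exact (div_lt_one (hR.trans hRL)).mpr (by linarith)

theorem spe_pos_of_renyiCap_eq (hW : ∀ x, IsPMF (W x)) (hφ : φ ∈ Ioo 0 1)
    (hφR : renyiCap φ W = R) (hR : 0 ≤ R) (hRL : R < log (Fintype.card Y)) {α₀ : ℝ}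
    (hα₀ : α₀ ∈ Ioo 0 1) (hRα₀ : R < renyiCap α₀ W) : 0 < spe R W := by
  have hbdd : BddAbove {e | ∃ α ∈ Ioo (0 : ℝ) 1, e = (1 - α) / α * (renyiCap α W - R)} :=
    ⟨_, fun _ ⟨α, hα, he⟩ => he ▸ div_mul_sub_renyiCap_le hW hφ hφR hR hRL hα⟩
  exact (mul_pos (div_pos (by linarith [hα₀.2]) hα₀.1) (sub_pos.mpr hRα₀)).trans_le
    (le_csSup hbdd ⟨α₀, hα₀, rfl⟩)

theorem exists_renyiCap_eq (hW : ∀ x, IsPMF (W x)) {C₀ : ℝ}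
    (hC₀ : Tendsto (fun α => renyiCap α W) (𝓝[>] 0) (𝓝 C₀)) (hC₀R : C₀ < R) {α₀ : ℝ}
    (hα₀ : α₀ ∈ Ioo 0 1) (hRα₀ : R < renyiCap α₀ W) : ∃ φ ∈ Ioo 0 1, renyiCap φ W = R := by
  obtain ⟨α₁, hα₁R, hα₁⟩ :=
    ((hC₀.eventually (eventually_lt_nhds hC₀R)).and (Ioo_mem_nhdsGT hα₀.1)).exists
  have hcont : ContinuousOn (fun α => renyiCap α W) (Icc α₁ α₀) :=
    (continuousOn_renyiCap hW).mono (Icc_subset_Ioo hα₁.1 hα₀.2)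
  obtain ⟨φ, hφ, hφR⟩ := intermediate_value_Ioo hα₁.2.le hcont ⟨hα₁R, hRα₀⟩
  exact ⟨φ, ⟨hα₁.1.trans hφ.1, hφ.2.trans hα₀.2⟩, hφR⟩

theorem exists_div_mul_renyiCap_eq_spe (hW : ∀ x, IsPMF (W x)) (hφ : φ ∈ Ioo 0 1)
    (hφR : renyiCap φ W = R) (hR : 0 < R) {α₀ : ℝ} (hα₀ : α₀ ∈ Ioo 0 1)
    (hRα₀ : R < renyiCap α₀ W) : ∃ η ∈ Ioo φ 1, (1 - η) / η * renyiCap η W = spe R W := by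
  set L := log (Fintype.card Y)
  have hRL : R < L := hRα₀.trans_le (renyiCap_le_log_card hW hα₀.1 hα₀.2)
  have hspe := spe_pos_of_renyiCap_eq hW hφ hφR hR.le hRL hα₀ hRα₀
  have hfactor : Tendsto (fun α : ℝ => (1 - α) / α * L) (𝓝[<] 1) (𝓝 0) := by
    have : ContinuousAt (fun α : ℝ => (1 - α) / α * L) 1 :=
      ((continuousAt_const.sub continuousAt_id).div continuousAt_id one_ne_zero).mul
        continuousAt_const
    simpa using this.tendsto.mono_left nhdsWithin_le_nhds
  obtain ⟨m, hmL, hm⟩ :=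
    ((hfactor.eventually (eventually_lt_nhds hspe)).and (Ioo_mem_nhdsLT hφ.2)).exists
  have hm0 : 0 < m := hφ.1.trans hm.1
  have hgm : (1 - m) / m * renyiCap m W < spe R W :=
    (mul_le_mul_of_nonneg_left (renyiCap_le_log_card hW hm0 hm.2)
      (div_nonneg (by linarith [hm.2]) hm0.le)).trans_lt hmL
  have hcont : ContinuousOn (fun α => (1 - α) / α * renyiCap α W) (Icc φ m) :=
    ((continuousOn_const.sub continuousOn_id).div continuousOn_id
      fun α hα => (hφ.1.trans_le hα.1).ne').mul
      ((continuousOn_renyiCap hW).mono (Icc_subset_Ioo hφ.1 hm.2))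
  obtain ⟨η, hη, hηspe⟩ := intermediate_value_Ioc' hm.1.le hcont
    ⟨hgm.le, by simpa only [hφR] using spe_lt_of_renyiCap_eq hW hφ hφR hR hRL⟩
  exact ⟨η, ⟨hη.1, hη.2.trans_lt hm.2⟩, hηspe⟩

end SpherePacking

theorem exists_orders_for_spe_general {X Y : Type*} [Fintype X] [Fintype Y] [Nonempty X]
    (W : X → Y → ℝ) (hW : ∀ x, IsPMF (W x)) (C0 : ℝ)
    (hC0 : Filter.Tendsto (fun α => renyiCap α W) (nhdsWithin 0 (Set.Ioi 0)) (nhds C0))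
    (R : ℝ) (hR : R ∈ Set.Ioo C0 (renyiCap 1 W)) :
    ∃ φ ∈ Set.Ioo (0:ℝ) 1, renyiCap φ W = R ∧
      ∃ η ∈ Set.Ioo φ 1, ((1 - η) / η) * renyiCap η W = spe R W := by
  obtain ⟨hC0R, hRC1⟩ := hR
  have hC0_nonneg : 0 ≤ C0 := ge_of_tendsto hC0 (by
    filter_upwards [Ioo_mem_nhdsGT one_pos] with α hα using renyiCap_nonneg hW hα.1 hα.2)
  obtain ⟨α₀, hα₀, hRα₀⟩ := exists_lt_renyiCap_of_lt_renyiCap_one hW hRC1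
  obtain ⟨φ, hφ, hφR⟩ := exists_renyiCap_eq hW hC0 hC0R hα₀ hRα₀
  exact ⟨φ, hφ, hφR,
    exists_div_mul_renyiCap_eq_spe hW hφ hφR (hC0_nonneg.trans_lt hC0R) hα₀ hRα₀⟩

/-- existence of the orders `φ` and `η` used in the sphere packing bound. -/
theorem exists_orders_for_spe {X Y : Type*} [Fintype X] [Fintype Y] [Nonempty X]
    (W : X → Y → ℝ) (hW : ∀ x, IsPMF (W x)) (C0 : ℝ)
    (hC0 : Filter.Tendsto (fun α => renyiCap α W) (nhdsWithin 0 (Set.Ioi 0)) (nhds C0))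
    (hne : C0 ≠ renyiCap 1 W) (R : ℝ) (hR : R ∈ Set.Ioo C0 (renyiCap 1 W)) :
    ∃ φ ∈ Set.Ioo (0:ℝ) 1, renyiCap φ W = R ∧
      ∃ η ∈ Set.Ioo φ 1, ((1 - η) / η) * renyiCap η W = spe R W :=
  exists_orders_for_spe_general W hW C0 hC0 R hR
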